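/- arXiv:1509.07617 — 9 statements merged into one kernel-verified Lean document; each statement's English description precedes it below -/
import Mathlib

section
/- Suppose D_g ∈ ℝ^{n_g×n_g} and D_l ∈ ℝ^{n_l×n_l} are diagonal matrices with positive diagonal entries, the incidence matrix B ∈ ℝ^{n×m} (n = n_g + n_l, rows partitioned into generator rows B_g ∈ ℝ^{n_g×m} and load rows B_l ∈ ℝ^{n_l×m}) satisfies 1_nᵀ B = 0 and Ker(Bᵀ) = span{1_n}, and η̄ ∈ ℝ^m, ω̄ = (ω̄_g, ω̄_l) ∈ ℝ^{n_g}×ℝ^{n_l}, P̄_m ∈ ℝ^{n_g}, P_l ∈ ℝ^{n_l} satisfy the steady-state equations 0 = Bᵀω̄, 0 = −D_g ω̄_g − B_g Γ sin(η̄) + P̄_m, and 0 = −D_l ω̄_l − B_l Γ sin(η̄) − P_l. Then ω̄ = ω* · 1_n, where ω* = (1_{n_g}ᵀ P̄_m − 1_{n_l}ᵀ P_l)/(1_{n_g}ᵀ D_g 1_{n_g} + 1_{n_l}ᵀ D_l 1_{n_l}). -/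
open Matrix

/-- Steady-state frequency of the lossless structure-preserving power network:
under the steady-state equations, the frequency deviation is the constant
`ω* = (1ᵀP̄m − 1ᵀPl)/(1ᵀDg1 + 1ᵀDl1)` at every bus. -/
theorem steady_state_frequency {ng nl m : ℕ}
    (Dg : Fin ng → ℝ) (Dl : Fin nl → ℝ) (γ : Fin m → ℝ)
    (B : Matrix (Fin ng ⊕ Fin nl) (Fin m) ℝ)
    (ηb : Fin m → ℝ) (ωb : Fin ng ⊕ Fin nl → ℝ)
    (Pmb : Fin ng → ℝ) (Pl : Fin nl → ℝ)
    (hDg : ∀ i, 0 < Dg i) (hDl : ∀ j, 0 < Dl j) (hγ : ∀ k, 0 < γ k)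
    -- 1ₙᵀ B = 0 :
    (hones : ∀ k, ∑ i, B i k = 0)
    -- Ker(Bᵀ) = span{1ₙ} :
    (hker : ∀ x : Fin ng ⊕ Fin nl → ℝ,
      (∀ k, ∑ i, B i k * x i = 0) ↔ ∃ c : ℝ, ∀ i, x i = c)
    -- 0 = Bᵀ ω̄ :
    (hss0 : ∀ k, ∑ i, B i k * ωb i = 0)
    -- 0 = −D_g ω̄_g − B_g Γ sin(η̄) + P̄_m :
    (hssg : ∀ i : Fin ng, 0 = -(Dg i * ωb (Sum.inl i))
      - (∑ k, B (Sum.inl i) k * (γ k * Real.sin (ηb k))) + Pmb i)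
    -- 0 = −D_l ω̄_l − B_l Γ sin(η̄) − P_l :
    (hssl : ∀ j : Fin nl, 0 = -(Dl j * ωb (Sum.inr j))
      - (∑ k, B (Sum.inr j) k * (γ k * Real.sin (ηb k))) - Pl j) :
    ∀ i, ωb i = (∑ i, Pmb i - ∑ j, Pl j) / (∑ i, Dg i + ∑ j, Dl j) := by
  obtain ⟨c, hc⟩ := (hker ωb).mp hss0
  have hcancel :
      (∑ i, ∑ k, B (Sum.inl i) k * (γ k * Real.sin (ηb k)))
      + (∑ j, ∑ k, B (Sum.inr j) k * (γ k * Real.sin (ηb k))) = 0 := by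
    rw [Finset.sum_comm (f := fun i k => B (Sum.inl i) k * (γ k * Real.sin (ηb k))),
        Finset.sum_comm (f := fun j k => B (Sum.inr j) k * (γ k * Real.sin (ηb k))),
        ← Finset.sum_add_distrib]
    apply Finset.sum_eq_zero
    intro k _
    rw [← Finset.sum_mul, ← Finset.sum_mul, ← add_mul]
    have h := hones k
    rw [Fintype.sum_sum_type] at h
    rw [h, zero_mul]
  have h1 : ∑ i, (Pmb i - Dg i * c
      - ∑ k, B (Sum.inl i) k * (γ k * Real.sin (ηb k))) = 0 :=
    Finset.sum_eq_zero fun i _ => by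
      have h := hssg i; rw [hc (Sum.inl i)] at h; linarith
  have h2 : ∑ j, (Pl j + Dl j * c
      + ∑ k, B (Sum.inr j) k * (γ k * Real.sin (ηb k))) = 0 :=
    Finset.sum_eq_zero fun j _ => by
      have h := hssl j; rw [hc (Sum.inr j)] at h; linarith
  rw [Finset.sum_sub_distrib, Finset.sum_sub_distrib, ← Finset.sum_mul] at h1
  rw [Finset.sum_add_distrib, Finset.sum_add_distrib, ← Finset.sum_mul] at h2
  have key : (∑ i, Dg i + ∑ j, Dl j) * c = ∑ i, Pmb i - ∑ j, Pl j := by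
    rw [add_mul]; linarith [hcancel]
  intro i
  have hpos : 0 < ∑ i, Dg i + ∑ j, Dl j := by
    have hg : (0:ℝ) ≤ ∑ i, Dg i :=
      Finset.sum_nonneg fun i _ => (hDg i).le
    have hl : (0:ℝ) ≤ ∑ j, Dl j :=
      Finset.sum_nonneg fun j _ => (hDl j).le
    cases i with
    | inl a =>
      have : (0:ℝ) < ∑ i, Dg i :=
        Finset.sum_pos (fun i _ => hDg i) ⟨a, Finset.mem_univ a⟩
      linarith
    | inr b =>
      have : (0:ℝ) < ∑ j, Dl j :=
        Finset.sum_pos (fun j _ => hDl j) ⟨b, Finset.mem_univ b⟩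
      linarith
  rw [hc i, eq_div_iff (ne_of_gt hpos), mul_comm]
  exact key
end

section
/- Let η : ℝ → ℝ^m and ω_g : ℝ → ℝ^{n_g} be differentiable and, together with a continuous input P_m : ℝ → ℝ^{n_g}, satisfy for all t: η̇(t) = B_gᵀ ω_g(t) + B_lᵀ D_l⁻¹(−B_l Γ sin(η(t)) − P_l) and M ω̇_g(t) = −D_g ω_g(t) − B_g Γ sin(η(t)) + P_m(t). Let constants (η̄, ω̄_g, P̄_m) satisfy 0 = B_gᵀ ω̄_g + B_lᵀ D_l⁻¹(−B_l Γ sin(η̄) − P_l) and 0 = −D_g ω̄_g − B_g Γ sin(η̄) + P̄_m, and set ω_l(t) = D_l⁻¹(−B_l Γ sin(η(t)) − P_l) and ω̄_l = D_l⁻¹(−B_l Γ sin(η̄) − P_l). Then for all t, d/dt U(η(t), ω_g(t)) = −(ω_g(t) − ω̄_g)ᵀ D_g (ω_g(t) − ω̄_g) − (ω_l(t) − ω̄_l)ᵀ D_l (ω_l(t) − ω̄_l) + (ω_g(t) − ω̄_g)ᵀ(P_m(t) − P̄_m). -/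
/-!
Split `U` into the kinetic energy `½ ‖ω_g − ω̄_g‖²_M` and the Bregman divergence of
`−Γ cos` at `η̄`; its time derivative is `(ω_g − ω̄_g)ᵀ M ω̇_g + (Γ (sin η − sin η̄))ᵀ η̇`.
Subtracting the equilibrium equations writes `η̇` and `M ω̇_g` in incremental variables
`x = ω_g − ω̄_g`, `y = ω_l − ω̄_l`, `φ = Γ (sin η − sin η̄)`, with `B_l φ = −D_l y`.
The line flows enter through `B_g` and `B_gᵀ` with opposite signs and cancel, while the load
coupling `φᵀ B_lᵀ y = −yᵀ D_l y` is the dissipation at the load buses.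
-/

open Finset Matrix

section

variable {ι κ ν : Type*} [Fintype ι] [Fintype κ] [Fintype ν]

noncomputable def kineticEnergy (M ωb ω : ι → ℝ) : ℝ :=
  ∑ i, M i * ((ω i - ωb i) ^ 2 / 2)

noncomputable def bregmanPotential (γ ηb η : κ → ℝ) : ℝ :=
  ∑ k, γ k * (Real.cos (ηb k) - Real.cos (η k) - Real.sin (ηb k) * (η k - ηb k))

theorem kineticEnergy_add_bregmanPotential (M ωb ω : ι → ℝ) (γ ηb η : κ → ℝ) :
    (1/2) * (∑ i, M i * (ω i - ωb i)^2) - (∑ k, γ k * Real.cos (η k))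
      + (∑ k, γ k * Real.cos (ηb k)) - ∑ k, γ k * Real.sin (ηb k) * (η k - ηb k)
      = kineticEnergy M ωb ω + bregmanPotential γ ηb η := by
  simp only [kineticEnergy, bregmanPotential, mul_sub, sum_sub_distrib, ← sum_div,
    mul_div_assoc', mul_assoc]
  ring

theorem hasDerivAt_kineticEnergy (M ωb : ι → ℝ) {ω : ℝ → ι → ℝ} {ω' : ι → ℝ} {t : ℝ}
    (hω : HasDerivAt ω ω' t) :
    HasDerivAt (fun s => kineticEnergy M ωb (ω s)) ((ω t - ωb) ⬝ᵥ (M * ω')) t := by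
  unfold kineticEnergy dotProduct
  refine HasDerivAt.fun_sum fun i _ => ?_
  refine (((((hasDerivAt_pi.mp hω i).sub_const (ωb i)).fun_pow 2).div_const 2).const_mul
    (M i)).congr_deriv ?_
  simp only [Pi.sub_apply, Pi.mul_apply]
  ring

theorem hasDerivAt_bregmanPotential (γ ηb : κ → ℝ) {η : ℝ → κ → ℝ} {η' : κ → ℝ} {t : ℝ}
    (hη : HasDerivAt η η' t) :
    HasDerivAt (fun s => bregmanPotential γ ηb (η s))
      ((fun k => γ k * (Real.sin (η t k) - Real.sin (ηb k))) ⬝ᵥ η') t := by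
  unfold bregmanPotential dotProduct
  refine HasDerivAt.fun_sum fun k _ => ?_
  have hηk := hasDerivAt_pi.mp hη k
  refine ((((Real.hasDerivAt_cos _).comp t hηk).const_sub (Real.cos (ηb k))).sub
    ((hηk.sub_const (ηb k)).const_mul (Real.sin (ηb k)))).const_mul (γ k) |>.congr_deriv ?_
  ring

theorem power_balance_of_interconnection (Bg : Matrix ι κ ℝ) (Bl : Matrix ν κ ℝ)
    (Dg : ι → ℝ) (Dl : ν → ℝ) (x u f : ι → ℝ) (y : ν → ℝ) (φ e : κ → ℝ)
    (he : e = Bgᵀ *ᵥ x + Blᵀ *ᵥ y) (hf : f = -(Dg * x) - Bg *ᵥ φ + u)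
    (hy : Bl *ᵥ φ = -(Dl * y)) :
    x ⬝ᵥ f + φ ⬝ᵥ e = -(x ⬝ᵥ (Dg * x)) - y ⬝ᵥ (Dl * y) + x ⬝ᵥ u := by
  have hg : φ ⬝ᵥ (Bgᵀ *ᵥ x) = x ⬝ᵥ (Bg *ᵥ φ) := by
    rw [dotProduct_mulVec, vecMul_transpose, dotProduct_comm]
  have hl : φ ⬝ᵥ (Blᵀ *ᵥ y) = -(y ⬝ᵥ (Dl * y)) := by
    rw [dotProduct_mulVec, vecMul_transpose, dotProduct_comm, hy, dotProduct_neg]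
  rw [he, hf, dotProduct_add, dotProduct_add, dotProduct_sub, dotProduct_neg, hg, hl]
  ring

end

theorem incremental_passivity_network_general {m ng nl : ℕ}
    (M Dg : Fin ng → ℝ) (Dl : Fin nl → ℝ) (γ : Fin m → ℝ)
    (Bg : Matrix (Fin ng) (Fin m) ℝ) (Bl : Matrix (Fin nl) (Fin m) ℝ)
    (Pl : Fin nl → ℝ)
    (hM : ∀ i, 0 < M i) (hDl : ∀ j, 0 < Dl j)
    (η : ℝ → Fin m → ℝ) (ωg : ℝ → Fin ng → ℝ) (Pm : ℝ → Fin ng → ℝ)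
    (ωl : ℝ → Fin nl → ℝ)
    -- ω_l = D_l⁻¹(−B_l Γ sin(η) − P_l) :
    (hωl : ∀ t j, ωl t j
      = (-(∑ k, Bl j k * (γ k * Real.sin (η t k))) - Pl j) / Dl j)
    -- η̇ = B_gᵀ ω_g + B_lᵀ D_l⁻¹(−B_l Γ sin(η) − P_l) :
    (hη : ∀ t, HasDerivAt η
      (fun k => (∑ i, Bg i k * ωg t i) + ∑ j, Bl j k * ωl t j) t)
    -- M ω̇_g = −D_g ω_g − B_g Γ sin(η) + P_m :
    (hωg : ∀ t, HasDerivAt ωg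
      (fun i => (-(Dg i * ωg t i)
        - (∑ k, Bg i k * (γ k * Real.sin (η t k))) + Pm t i) / M i) t)
    (ηb : Fin m → ℝ) (ωgb : Fin ng → ℝ) (Pmb : Fin ng → ℝ) (ωlb : Fin nl → ℝ)
    (hωlb : ∀ j, ωlb j
      = (-(∑ k, Bl j k * (γ k * Real.sin (ηb k))) - Pl j) / Dl j)
    -- 0 = B_gᵀ ω̄_g + B_lᵀ D_l⁻¹(−B_l Γ sin(η̄) − P_l) :
    (hss1 : ∀ k, 0 = (∑ i, Bg i k * ωgb i) + ∑ j, Bl j k * ωlb j)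
    -- 0 = −D_g ω̄_g − B_g Γ sin(η̄) + P̄_m :
    (hss2 : ∀ i, 0 = -(Dg i * ωgb i)
      - (∑ k, Bg i k * (γ k * Real.sin (ηb k))) + Pmb i)
    (U : (Fin m → ℝ) → (Fin ng → ℝ) → ℝ)
    (hU : ∀ e w, U e w = (1/2) * (∑ i, M i * (w i - ωgb i)^2)
      - (∑ k, γ k * Real.cos (e k)) + (∑ k, γ k * Real.cos (ηb k))
      - ∑ k, γ k * Real.sin (ηb k) * (e k - ηb k)) :
    ∀ t, HasDerivAt (fun s => U (η s) (ωg s))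
      (-(∑ i, Dg i * (ωg t i - ωgb i)^2) - (∑ j, Dl j * (ωl t j - ωlb j)^2)
        + ∑ i, (ωg t i - ωgb i) * (Pm t i - Pmb i)) t := by
  intro t
  have hU' : ∀ e w, U e w = kineticEnergy M ωgb w + bregmanPotential γ ηb e := fun e w => by
    rw [hU, kineticEnergy_add_bregmanPotential]
  set x := ωg t - ωgb
  set y := ωl t - ωlb
  set φ : Fin m → ℝ := fun k => γ k * (Real.sin (η t k) - Real.sin (ηb k))
  have hη' : (fun k => (∑ i, Bg i k * ωg t i) + ∑ j, Bl j k * ωl t j)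
      = Bgᵀ *ᵥ x + Blᵀ *ᵥ y := by
    funext k
    simp only [mulVec, dotProduct, transpose_apply, Pi.add_apply, Pi.sub_apply, x, y, mul_sub,
      sum_sub_distrib]
    linarith [hss1 k]
  have hωg' : M * (fun i => (-(Dg i * ωg t i) - (∑ k, Bg i k * (γ k * Real.sin (η t k)))
      + Pm t i) / M i) = -(Dg * x) - Bg *ᵥ φ + (Pm t - Pmb) := by
    funext i
    simp only [mulVec, dotProduct, Pi.mul_apply, Pi.add_apply, Pi.sub_apply, Pi.neg_apply, x, φ,
      mul_sub, sum_sub_distrib, mul_div_cancel₀ _ (hM i).ne']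
    linarith [hss2 i]
  have hωl' : Bl *ᵥ φ = -(Dl * y) := by
    funext j
    simp only [mulVec, dotProduct, Pi.mul_apply, Pi.sub_apply, Pi.neg_apply, y, φ, mul_sub,
      sum_sub_distrib, hωl t j, hωlb j, mul_div_cancel₀ _ (hDl j).ne']
    ring
  simp only [hU']
  refine ((hasDerivAt_kineticEnergy M ωgb (hωg t)).add
    (hasDerivAt_bregmanPotential γ ηb (hη t))).congr_deriv ?_
  rw [power_balance_of_interconnection Bg Bl Dg Dl _ _ _ _ _ _ hη' hωg' hωl']
  simp only [dotProduct, Pi.mul_apply, Pi.sub_apply, x, y, sq, mul_left_comm]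

/-- Incremental cyclo-passivity of the power network: along solutions, the
Bregman storage function `U` satisfies
`U̇ = −‖ω_g−ω̄_g‖²_{D_g} − ‖ω_l−ω̄_l‖²_{D_l} + (ω_g−ω̄_g)ᵀ(P_m−P̄_m)`. -/
theorem incremental_passivity_network {m ng nl : ℕ}
    (M Dg : Fin ng → ℝ) (Dl : Fin nl → ℝ) (γ : Fin m → ℝ)
    (Bg : Matrix (Fin ng) (Fin m) ℝ) (Bl : Matrix (Fin nl) (Fin m) ℝ)
    (Pl : Fin nl → ℝ)
    (hM : ∀ i, 0 < M i) (hDg : ∀ i, 0 < Dg i) (hDl : ∀ j, 0 < Dl j)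
    (hγ : ∀ k, 0 < γ k)
    (η : ℝ → Fin m → ℝ) (ωg : ℝ → Fin ng → ℝ) (Pm : ℝ → Fin ng → ℝ)
    (hPmcont : Continuous Pm)
    (ωl : ℝ → Fin nl → ℝ)
    -- ω_l = D_l⁻¹(−B_l Γ sin(η) − P_l) :
    (hωl : ∀ t j, ωl t j
      = (-(∑ k, Bl j k * (γ k * Real.sin (η t k))) - Pl j) / Dl j)
    -- η̇ = B_gᵀ ω_g + B_lᵀ D_l⁻¹(−B_l Γ sin(η) − P_l) :
    (hη : ∀ t, HasDerivAt η
      (fun k => (∑ i, Bg i k * ωg t i) + ∑ j, Bl j k * ωl t j) t)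
    -- M ω̇_g = −D_g ω_g − B_g Γ sin(η) + P_m :
    (hωg : ∀ t, HasDerivAt ωg
      (fun i => (-(Dg i * ωg t i)
        - (∑ k, Bg i k * (γ k * Real.sin (η t k))) + Pm t i) / M i) t)
    (ηb : Fin m → ℝ) (ωgb : Fin ng → ℝ) (Pmb : Fin ng → ℝ) (ωlb : Fin nl → ℝ)
    (hωlb : ∀ j, ωlb j
      = (-(∑ k, Bl j k * (γ k * Real.sin (ηb k))) - Pl j) / Dl j)
    -- 0 = B_gᵀ ω̄_g + B_lᵀ D_l⁻¹(−B_l Γ sin(η̄) − P_l) :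
    (hss1 : ∀ k, 0 = (∑ i, Bg i k * ωgb i) + ∑ j, Bl j k * ωlb j)
    -- 0 = −D_g ω̄_g − B_g Γ sin(η̄) + P̄_m :
    (hss2 : ∀ i, 0 = -(Dg i * ωgb i)
      - (∑ k, Bg i k * (γ k * Real.sin (ηb k))) + Pmb i)
    (U : (Fin m → ℝ) → (Fin ng → ℝ) → ℝ)
    (hU : ∀ e w, U e w = (1/2) * (∑ i, M i * (w i - ωgb i)^2)
      - (∑ k, γ k * Real.cos (e k)) + (∑ k, γ k * Real.cos (ηb k))
      - ∑ k, γ k * Real.sin (ηb k) * (e k - ηb k)) :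
    ∀ t, HasDerivAt (fun s => U (η s) (ωg s))
      (-(∑ i, Dg i * (ωg t i - ωgb i)^2) - (∑ j, Dl j * (ωl t j - ωlb j)^2)
        + ∑ i, (ωg t i - ωgb i) * (Pm t i - Pmb i)) t :=
  incremental_passivity_network_general M Dg Dl γ Bg Bl Pl hM hDl η ωg Pm ωl hωl hη hωg ηb ωgb Pmb
    ωlb hωlb hss1 hss2 U hU
end

section
/- Let T_m, T_θ, K > 0 be constants, let ω_g : ℝ → ℝ be a continuous input, and let P_m, θ : ℝ → ℝ be differentiable functions satisfying for all t: T_m Ṗ_m(t) = −P_m(t) − K⁻¹ω_g(t) + θ(t) and T_θ θ̇(t) = −θ(t) + P_m(t). Let P̄_m = θ̄ ∈ ℝ be constants (the steady state with zero frequency deviation). Define Z₁(θ, P_m) = (T_θ K/2)(θ − θ̄)² + (T_m K/2)(P_m − P̄_m)². Then for all t, d/dt Z₁(θ(t), P_m(t)) = −K(θ(t) − P_m(t))² − ω_g(t)(P_m(t) − P̄_m). -/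
/-!
By the chain rule, `Ż₁ = K(θ − θ̄)(P_m − θ) + K(P_m − P̄_m)(θ − P_m) − ω_g(P_m − P̄_m)`;
since `θ̄ = P̄_m`, the two cross terms combine into `−K(θ − P_m)²`.
-/

theorem HasDerivAt.half_mul_sq_sub {f : ℝ → ℝ} {f' x : ℝ} (c a : ℝ) (hf : HasDerivAt f f' x) :
    HasDerivAt (fun s => c / 2 * (f s - a) ^ 2) (c * (f x - a) * f') x := by
  refine (((hf.sub_const a).pow 2).const_mul (c / 2)).congr_deriv ?_
  push_cast
  ring

theorem turbine_storage_rate_eq {Tm Tθ K : ℝ} (hTm : Tm ≠ 0) (hTθ : Tθ ≠ 0) (hK : K ≠ 0)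
    (ω P θ a : ℝ) :
    Tθ * K * (θ - a) * ((-θ + P) / Tθ) + Tm * K * (P - a) * ((-P - K⁻¹ * ω + θ) / Tm) =
      -(K * (θ - P) ^ 2) - ω * (P - a) := by
  field_simp
  ring

theorem first_order_turbine_passivity_general (Tm Tθ K : ℝ)
    (hTm : 0 < Tm) (hTθ : 0 < Tθ) (hK : 0 < K)
    (ωg Pm θ : ℝ → ℝ)
    -- T_m Ṗ_m = −P_m − K⁻¹ ω_g + θ :
    (hPm : ∀ t, HasDerivAt Pm ((-Pm t - K⁻¹ * ωg t + θ t) / Tm) t)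
    -- T_θ θ̇ = −θ + P_m :
    (hθ : ∀ t, HasDerivAt θ ((-θ t + Pm t) / Tθ) t)
    (Pmb θb : ℝ) (hs : Pmb = θb) :
    ∀ t, HasDerivAt
      (fun s => Tθ * K / 2 * (θ s - θb)^2 + Tm * K / 2 * (Pm s - Pmb)^2)
      (-(K * (θ t - Pm t)^2) - ωg t * (Pm t - Pmb)) t := by
  intro t
  subst hs
  rw [← turbine_storage_rate_eq hTm.ne' hTθ.ne' hK.ne']
  exact ((hθ t).half_mul_sq_sub _ _).add ((hPm t).half_mul_sq_sub _ _)

/-- Incremental passivity of the first-order turbine-governor with the proposed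
controller: `Ż₁ = −K(θ − P_m)² − ω_g(P_m − P̄_m)`. -/
theorem first_order_turbine_passivity (Tm Tθ K : ℝ)
    (hTm : 0 < Tm) (hTθ : 0 < Tθ) (hK : 0 < K)
    (ωg Pm θ : ℝ → ℝ) (hωg : Continuous ωg)
    -- T_m Ṗ_m = −P_m − K⁻¹ ω_g + θ :
    (hPm : ∀ t, HasDerivAt Pm ((-Pm t - K⁻¹ * ωg t + θ t) / Tm) t)
    -- T_θ θ̇ = −θ + P_m :
    (hθ : ∀ t, HasDerivAt θ ((-θ t + Pm t) / Tθ) t)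
    (Pmb θb : ℝ) (hs : Pmb = θb) :
    ∀ t, HasDerivAt
      (fun s => Tθ * K / 2 * (θ s - θb)^2 + Tm * K / 2 * (Pm s - Pmb)^2)
      (-(K * (θ t - Pm t)^2) - ωg t * (Pm t - Pmb)) t :=
  first_order_turbine_passivity_general Tm Tθ K hTm hTθ hK ωg Pm θ hPm hθ Pmb θb hs
end

section
/- Let T_m, T_θ, K, D_g > 0 be constants, let ω_g, P_m, θ : ℝ → ℝ be differentiable functions satisfying T_m Ṗ_m(t) = −P_m(t) − K⁻¹ω_g(t) + θ(t) and T_θ θ̇(t) = −θ(t) + P_m(t) for all t, and let P̄_m = θ̄ ∈ ℝ be constants. Then, with Z₁(θ, P_m) = (T_θ K/2)(θ − θ̄)² + (T_m K/2)(P_m − P̄_m)², for all t: (−D_g ω_g(t)² + ω_g(t)(P_m(t) − P̄_m)) + d/dt Z₁(θ(t), P_m(t)) = −D_g ω_g(t)² − K(θ(t) − P_m(t))² ≤ 0. -/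
/-!
Along trajectories of the governor and its controller, `Ż₁ = −ω_g (P_m − P̄_m) − K (θ − P_m)²`:
differentiating the two quadratic terms, the factors `T_θ K` and `T_m K` cancel the time constants,
and with `P̄_m = θ̄` the cross terms combine into the perfect square `−K (θ − P_m)²`. The supply
`−ω_g (P_m − P̄_m)` is exactly cancelled by the generator's term `ω_g (P_m − P̄_m)`.
-/

theorem HasDerivAt.const_mul_half_sq_sub {x : ℝ → ℝ} {x' t : ℝ} (hx : HasDerivAt x x' t)
    (c a : ℝ) :
    HasDerivAt (fun s => c / 2 * (x s - a) ^ 2) (c * (x t - a) * x') t := by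
  refine (((hx.sub_const a).pow 2).const_mul (c / 2)).congr_deriv ?_
  ring

theorem hasDerivAt_turbineGovernor_storage {Tm Tθ K : ℝ} (hTm : Tm ≠ 0) (hTθ : Tθ ≠ 0)
    (hK : K ≠ 0) {ωg Pm θ : ℝ → ℝ} {t : ℝ}
    (hPm : HasDerivAt Pm ((-Pm t - K⁻¹ * ωg t + θ t) / Tm) t)
    (hθ : HasDerivAt θ ((-θ t + Pm t) / Tθ) t) (θb : ℝ) :
    HasDerivAt (fun s => Tθ * K / 2 * (θ s - θb) ^ 2 + Tm * K / 2 * (Pm s - θb) ^ 2)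
      (-ωg t * (Pm t - θb) - K * (θ t - Pm t) ^ 2) t := by
  refine ((hθ.const_mul_half_sq_sub (Tθ * K) θb).add
    (hPm.const_mul_half_sq_sub (Tm * K) θb)).congr_deriv ?_
  field_simp
  ring

theorem first_order_passive_interconnection_general (Tm Tθ K Dg : ℝ)
    (hTm : 0 < Tm) (hTθ : 0 < Tθ) (hK : 0 < K) (hDg : 0 < Dg)
    (ωg Pm θ : ℝ → ℝ)
    -- T_m Ṗ_m = −P_m − K⁻¹ ω_g + θ :
    (hPm : ∀ t, HasDerivAt Pm ((-Pm t - K⁻¹ * ωg t + θ t) / Tm) t)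
    -- T_θ θ̇ = −θ + P_m :
    (hθ : ∀ t, HasDerivAt θ ((-θ t + Pm t) / Tθ) t)
    (Pmb θb : ℝ) (hs : Pmb = θb) :
    ∀ t, ((-Dg * (ωg t)^2 + ωg t * (Pm t - Pmb))
        + deriv (fun s => Tθ * K / 2 * (θ s - θb)^2
            + Tm * K / 2 * (Pm s - Pmb)^2) t
      = -Dg * (ωg t)^2 - K * (θ t - Pm t)^2)
    ∧ -Dg * (ωg t)^2 - K * (θ t - Pm t)^2 ≤ 0 := by
  intro t
  subst hs
  refine ⟨?_, ?_⟩
  · rw [(hasDerivAt_turbineGovernor_storage hTm.ne' hTθ.ne' hK.ne' (hPm t) (hθ t) Pmb).deriv]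
    ring
  · linarith [mul_nonneg hDg.le (sq_nonneg (ωg t)), mul_nonneg hK.le (sq_nonneg (θ t - Pm t))]

/-- Passive interconnection of a generator bus and the first-order
turbine-governor with its controller:
`U̇_g + Ż₁ = −D_g ω_g² − K(θ − P_m)² ≤ 0`. -/
theorem first_order_passive_interconnection (Tm Tθ K Dg : ℝ)
    (hTm : 0 < Tm) (hTθ : 0 < Tθ) (hK : 0 < K) (hDg : 0 < Dg)
    (ωg Pm θ : ℝ → ℝ) (hωg : Differentiable ℝ ωg)
    -- T_m Ṗ_m = −P_m − K⁻¹ ω_g + θ :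
    (hPm : ∀ t, HasDerivAt Pm ((-Pm t - K⁻¹ * ωg t + θ t) / Tm) t)
    -- T_θ θ̇ = −θ + P_m :
    (hθ : ∀ t, HasDerivAt θ ((-θ t + Pm t) / Tθ) t)
    (Pmb θb : ℝ) (hs : Pmb = θb) :
    ∀ t, ((-Dg * (ωg t)^2 + ωg t * (Pm t - Pmb))
        + deriv (fun s => Tθ * K / 2 * (θ s - θb)^2
            + Tm * K / 2 * (Pm s - Pmb)^2) t
      = -Dg * (ωg t)^2 - K * (θ t - Pm t)^2)
    ∧ -Dg * (ωg t)^2 - K * (θ t - Pm t)^2 ≤ 0 :=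
  first_order_passive_interconnection_general Tm Tθ K Dg hTm hTθ hK hDg ωg Pm θ hPm hθ Pmb θb hs
end

section
/- Let T_s, T_m, T_θ, K, D_g > 0 be constants, let ω_g : ℝ → ℝ be a continuous input, and let P_s, P_m, θ : ℝ → ℝ be differentiable functions satisfying for all t: T_s Ṗ_s(t) = −P_s(t) − K⁻¹ω_g(t) + θ(t), T_m Ṗ_m(t) = −P_m(t) + P_s(t), and T_θ θ̇(t) = −θ(t) + P_s(t) − (1 − K⁻¹)ω_g(t). Let P̄_s = P̄_m = θ̄ ∈ ℝ be constants. Define Z₂ = (T_θ/2)(θ − θ̄)² + (T_s/2)(P_s − P̄_s)² + (T_s/2)(P_m − P_s)². Then for all t: (−D_g ω_g(t)² + ω_g(t)(P_m(t) − P̄_m)) + d/dt Z₂(t) = v(t)ᵀ W v(t), where v(t) = (ω_g(t), P_s(t) − P_m(t), P_s(t) − θ(t))ᵀ and W is the symmetric 3×3 matrix with rows (−D_g, −½K⁻¹ − ½, −½K⁻¹ + ½), (−½K⁻¹ − ½, −T_s/T_m, −½), (−½K⁻¹ + ½, −½, −1). -/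
/-!
Differentiating `Z₂` term by term along the dynamics, each weight `T_θ`, `T_s` cancels the time
constant dividing the corresponding vector field, so `Ż₂` is a polynomial in the states, `ω_g`, `K⁻¹`
and `T_s / T_m`. Once the three equilibria coincide, `U̇_g + Ż₂` is a quadratic form in
`(ω_g, P_s − P_m, P_s − θ)`, and comparing coefficients gives `W`.
-/

open Matrix

theorem HasDerivAt.half_mul_sq {f : ℝ → ℝ} {f' t : ℝ} (c : ℝ) (hf : HasDerivAt f f' t) :
    HasDerivAt (fun s => c / 2 * f s ^ 2) (c * f t * f') t :=
  ((hf.pow 2).const_mul (c / 2)).congr_deriv (by push_cast; ring)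

theorem dotProduct_mulVec_symm_fin_three {R : Type*} [CommRing R] (a b c d e f x y z : R) :
    ![x, y, z] ⬝ᵥ (!![a, b, c; b, d, e; c, e, f] *ᵥ ![x, y, z]) =
      a * x ^ 2 + d * y ^ 2 + f * z ^ 2 + 2 * (b * x * y + c * x * z + e * y * z) := by
  simp only [dotProduct, mulVec, of_apply, cons_val', cons_val_fin_one, Fin.sum_univ_three,
    cons_val_zero, cons_val_one, cons_val]
  ring

theorem second_order_dissipation_general (Ts Tm Tθ K Dg : ℝ)
    (hTs : 0 < Ts) (hTθ : 0 < Tθ)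
    (ωg Ps Pm θ : ℝ → ℝ)
    -- T_s Ṗ_s = −P_s − K⁻¹ ω_g + θ :
    (hPs : ∀ t, HasDerivAt Ps ((-Ps t - K⁻¹ * ωg t + θ t) / Ts) t)
    -- T_m Ṗ_m = −P_m + P_s :
    (hPm : ∀ t, HasDerivAt Pm ((-Pm t + Ps t) / Tm) t)
    -- T_θ θ̇ = −θ + P_s − (1 − K⁻¹) ω_g :
    (hθ : ∀ t, HasDerivAt θ ((-θ t + Ps t - (1 - K⁻¹) * ωg t) / Tθ) t)
    (Psb Pmb θb : ℝ) (h1 : Psb = Pmb) (h2 : Pmb = θb)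
    (W : Matrix (Fin 3) (Fin 3) ℝ)
    (hW : W = !![-Dg,            -(K⁻¹/2) - 1/2, -(K⁻¹/2) + 1/2;
                 -(K⁻¹/2) - 1/2, -(Ts/Tm),       -(1/2);
                 -(K⁻¹/2) + 1/2, -(1/2),         -1]) :
    ∀ t, (-Dg * (ωg t)^2 + ωg t * (Pm t - Pmb))
        + deriv (fun s => Tθ/2 * (θ s - θb)^2 + Ts/2 * (Ps s - Psb)^2
            + Ts/2 * (Pm s - Ps s)^2) t
      = ![ωg t, Ps t - Pm t, Ps t - θ t] ⬝ᵥ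
          (W *ᵥ ![ωg t, Ps t - Pm t, Ps t - θ t]) := by
  intro t
  have hZ₂ : HasDerivAt (fun s => Tθ/2 * (θ s - θb)^2 + Ts/2 * (Ps s - Psb)^2
      + Ts/2 * (Pm s - Ps s)^2) _ t := ((((hθ t).sub_const θb).half_mul_sq Tθ).add
    (((hPs t).sub_const Psb).half_mul_sq Ts)).add (((hPm t).sub (hPs t)).half_mul_sq Ts)
  rw [hZ₂.deriv, hW, dotProduct_mulVec_symm_fin_three, Pi.sub_apply]
  subst h1 h2
  field_simp
  ring

/-- Dissipation identity for the interconnection of a generator bus and the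
second-order turbine-governor with its controller:
`U̇_g + Ż₂ = vᵀ W v` with `v = (ω_g, P_s − P_m, P_s − θ)`. -/
theorem second_order_dissipation (Ts Tm Tθ K Dg : ℝ)
    (hTs : 0 < Ts) (hTm : 0 < Tm) (hTθ : 0 < Tθ) (hK : 0 < K) (hDg : 0 < Dg)
    (ωg Ps Pm θ : ℝ → ℝ) (hωg : Continuous ωg)
    -- T_s Ṗ_s = −P_s − K⁻¹ ω_g + θ :
    (hPs : ∀ t, HasDerivAt Ps ((-Ps t - K⁻¹ * ωg t + θ t) / Ts) t)
    -- T_m Ṗ_m = −P_m + P_s :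
    (hPm : ∀ t, HasDerivAt Pm ((-Pm t + Ps t) / Tm) t)
    -- T_θ θ̇ = −θ + P_s − (1 − K⁻¹) ω_g :
    (hθ : ∀ t, HasDerivAt θ ((-θ t + Ps t - (1 - K⁻¹) * ωg t) / Tθ) t)
    (Psb Pmb θb : ℝ) (h1 : Psb = Pmb) (h2 : Pmb = θb)
    (W : Matrix (Fin 3) (Fin 3) ℝ)
    (hW : W = !![-Dg,            -(K⁻¹/2) - 1/2, -(K⁻¹/2) + 1/2;
                 -(K⁻¹/2) - 1/2, -(Ts/Tm),       -(1/2);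
                 -(K⁻¹/2) + 1/2, -(1/2),         -1]) :
    ∀ t, (-Dg * (ωg t)^2 + ωg t * (Pm t - Pmb))
        + deriv (fun s => Tθ/2 * (θ s - θb)^2 + Ts/2 * (Ps s - Psb)^2
            + Ts/2 * (Pm s - Ps s)^2) t
      = ![ωg t, Ps t - Pm t, Ps t - θ t] ⬝ᵥ
          (W *ᵥ ![ωg t, Ps t - Pm t, Ps t - θ t]) :=
  second_order_dissipation_general Ts Tm Tθ K Dg hTs hTθ ωg Ps Pm θ hPs hPm hθ Psb Pmb θb h1 h2 W hW
end

section
/- Let D, T_s, T_m > 0 satisfy 4 T_s/T_m > 1 and D·T_s/T_m > 1, let α = (T_m/T_s)²(4 T_s/T_m − 1)(D·T_s/T_m − 1), and let k ∈ ℝ satisfy 1 − T_m/T_s − √α < k < 1 − T_m/T_s + √α. Then the symmetric 3×3 matrix W with rows (−D, −k/2 − 1/2, −k/2 + 1/2), (−k/2 − 1/2, −T_s/T_m, −1/2), (−k/2 + 1/2, −1/2, −1) is negative definite. -/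
/-!
Completing the square in the third coordinate leaves a binary form whose discriminant is negative
exactly when `k` lies strictly between the roots `1 - Tm/Ts ± √α`; this is the Schur complement
criterion for `-W`.
-/

open Matrix

section OrderedField

variable {R : Type*} [Field R] [LinearOrder R] [IsStrictOrderedRing R]

lemma binary_form_pos {a b c x y : R} (ha : 0 < a) (hdisc : b ^ 2 < 4 * a * c)
    (hxy : x ≠ 0 ∨ y ≠ 0) : 0 < a * x ^ 2 + b * x * y + c * y ^ 2 := by
  by_cases hy : y = 0
  · have hx : x ≠ 0 := by simpa [hy] using hxy
    rw [hy, show a * x ^ 2 + b * x * 0 + c * 0 ^ 2 = a * x ^ 2 by ring]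
    positivity
  · have hsq : 4 * a * (a * x ^ 2 + b * x * y + c * y ^ 2)
        = (2 * a * x + b * y) ^ 2 + (4 * a * c - b ^ 2) * y ^ 2 := by ring
    have hdisc_term : 0 < (4 * a * c - b ^ 2) * y ^ 2 := mul_pos (by linarith) (by positivity)
    have hscaled : 0 < 4 * a * (a * x ^ 2 + b * x * y + c * y ^ 2) :=
      hsq ▸ add_pos_of_nonneg_of_pos (sq_nonneg _) hdisc_term
    exact pos_of_mul_pos_right hscaled (by positivity)

lemma ternary_form_pos {D t k x y z : R} (ht : 1 / 4 < t)
    (hdisc : ((k + 3) / 2) ^ 2 < 4 * (t - 1 / 4) * (D - (k - 1) ^ 2 / 4))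
    (hxyz : x ≠ 0 ∨ y ≠ 0 ∨ z ≠ 0) :
    0 < D * x ^ 2 + (k + 1) * x * y + (k - 1) * x * z + t * y ^ 2 + y * z + z ^ 2 := by
  have hsq : D * x ^ 2 + (k + 1) * x * y + (k - 1) * x * z + t * y ^ 2 + y * z + z ^ 2
      = (z + ((k - 1) * x + y) / 2) ^ 2
        + ((t - 1 / 4) * y ^ 2 + (k + 3) / 2 * y * x + (D - (k - 1) ^ 2 / 4) * x ^ 2) := by
    ring
  rw [hsq]
  by_cases hxy : y ≠ 0 ∨ x ≠ 0
  · have := binary_form_pos (by linarith) hdisc hxy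
    positivity
  · obtain ⟨rfl, rfl⟩ : y = 0 ∧ x = 0 := by tauto
    have hz : z ≠ 0 := by tauto
    ring_nf
    positivity

lemma discrim_lt_of_sq_sub_lt {D t k : R} (ht : 0 < t)
    (hk : (k - (1 - t⁻¹)) ^ 2 < t⁻¹ ^ 2 * (4 * t - 1) * (D * t - 1)) :
    ((k + 3) / 2) ^ 2 < 4 * (t - 1 / 4) * (D - (k - 1) ^ 2 / 4) := by
  have hscaled := mul_lt_mul_of_pos_left hk (pow_pos ht 2)
  have hlhs : t ^ 2 * (k - (1 - t⁻¹)) ^ 2 = (t * (k - 1) + 1) ^ 2 := by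
    field_simp
    ring
  have hrhs : t ^ 2 * (t⁻¹ ^ 2 * (4 * t - 1) * (D * t - 1)) = (4 * t - 1) * (D * t - 1) := by
    field_simp
  rw [hlhs, hrhs] at hscaled
  have hgap : (4 * t - 1) * (D * t - 1) - (t * (k - 1) + 1) ^ 2
      = t * (4 * (t - 1 / 4) * (D - (k - 1) ^ 2 / 4) - ((k + 3) / 2) ^ 2) := by ring
  have := pos_of_mul_pos_right (hgap ▸ sub_pos.2 hscaled) ht.le
  linarith

end OrderedField

lemma dotProduct_mulVec_dissipation (D t k : ℝ) (v : Fin 3 → ℝ) :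
    v ⬝ᵥ ((!![-D,          -(k/2) - 1/2, -(k/2) + 1/2;
              -(k/2) - 1/2, -t,          -(1/2);
              -(k/2) + 1/2, -(1/2),      -1] : Matrix (Fin 3) (Fin 3) ℝ) *ᵥ v)
      = -(D * v 0 ^ 2 + (k + 1) * v 0 * v 1 + (k - 1) * v 0 * v 2 + t * v 1 ^ 2
          + v 1 * v 2 + v 2 ^ 2) := by
  simp only [dotProduct, mulVec, of_apply, cons_val', cons_val_fin_one, Fin.sum_univ_three,
    cons_val_zero, cons_val_one, cons_val]
  ring

lemma fin_three_ne_zero_cases {M : Type*} [Zero M] {v : Fin 3 → M} (hv : v ≠ 0) :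
    v 0 ≠ 0 ∨ v 1 ≠ 0 ∨ v 2 ≠ 0 := by
  contrapose! hv
  ext i
  fin_cases i <;> simp [hv]

theorem dissipation_matrix_negdef_general (D Ts Tm : ℝ)
    (h1 : 1 < 4 * Ts / Tm)
    (α : ℝ) (hα : α = (Tm/Ts)^2 * (4 * Ts / Tm - 1) * (D * Ts / Tm - 1))
    (k : ℝ) (hk1 : 1 - Tm/Ts - Real.sqrt α < k)
    (hk2 : k < 1 - Tm/Ts + Real.sqrt α) :
    ∀ v : Fin 3 → ℝ, v ≠ 0 →
      v ⬝ᵥ ((!![-D,          -(k/2) - 1/2, -(k/2) + 1/2;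
                -(k/2) - 1/2, -(Ts/Tm),    -(1/2);
                -(k/2) + 1/2, -(1/2),      -1] : Matrix (Fin 3) (Fin 3) ℝ)
        *ᵥ v) < 0 := by
  intro v hv
  rw [mul_div_assoc] at h1 hα
  rw [mul_div_assoc, ← inv_div] at hα
  rw [← inv_div] at hk1 hk2
  set t := Ts / Tm
  have ht : 1 / 4 < t := by linarith
  have hk : (k - (1 - t⁻¹)) ^ 2 < α := Real.sq_lt.2 ⟨by linarith, by linarith⟩
  rw [hα] at hk
  rw [dotProduct_mulVec_dissipation, neg_neg_iff_pos]
  exact ternary_form_pos ht (discrim_lt_of_sq_sub_lt (by linarith) hk)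
    (fin_three_ne_zero_cases hv)

/-- Negative definiteness of the dissipation matrix `W` for the generator
interconnected with the second-order turbine-governor, under the conditions
on the droop constant `k = K⁻¹`. -/
theorem dissipation_matrix_negdef (D Ts Tm : ℝ)
    (hD : 0 < D) (hTs : 0 < Ts) (hTm : 0 < Tm)
    (h1 : 1 < 4 * Ts / Tm) (h2 : 1 < D * Ts / Tm)
    (α : ℝ) (hα : α = (Tm/Ts)^2 * (4 * Ts / Tm - 1) * (D * Ts / Tm - 1))
    (k : ℝ) (hk1 : 1 - Tm/Ts - Real.sqrt α < k)
    (hk2 : k < 1 - Tm/Ts + Real.sqrt α) :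
    ∀ v : Fin 3 → ℝ, v ≠ 0 →
      v ⬝ᵥ ((!![-D,          -(k/2) - 1/2, -(k/2) + 1/2;
                -(k/2) - 1/2, -(Ts/Tm),    -(1/2);
                -(k/2) + 1/2, -(1/2),      -1] : Matrix (Fin 3) (Fin 3) ℝ)
        *ᵥ v) < 0 :=
  dissipation_matrix_negdef_general D Ts Tm h1 α hα k hk1 hk2
end

section
/- Let L ∈ ℝ^{n×n} be a symmetric positive semidefinite matrix with L·1_n = 0, let Q ∈ ℝ^{n×n} be diagonal with positive diagonal entries, R ∈ ℝ^n, and let θ̄ ∈ ℝ^n be such that Qθ̄ + R ∈ span{1_n}. Then for every θ ∈ ℝ^n: (θ − θ̄)ᵀ Q L (Qθ + R) = (Qθ + R − (Qθ̄ + R))ᵀ L (Qθ + R − (Qθ̄ + R)) ≥ 0. -/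
open Matrix

/-! Since `Qθ̄ + R` is a constant vector and `L` annihilates constants,
`L (Qθ + R) = L (Qθ + R - (Qθ̄ + R))`, while `Q (θ - θ̄) = Qθ + R - (Qθ̄ + R)`.
The left side is therefore the quadratic form of `L` at `Qθ + R - (Qθ̄ + R)`,
which is nonnegative because `L` is positive semidefinite. -/

namespace Matrix

variable {m n α : Type*} [Fintype n] [CommRing α]

theorem mulVec_const_eq_zero {L : Matrix m n α} (hL1 : L *ᵥ (fun _ => 1) = 0) (c : α) :
    L *ᵥ (fun _ => c) = 0 := by
  have hc : (fun _ => c : n → α) = c • fun _ => 1 := funext fun _ => (mul_one c).symm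
  rw [hc, mulVec_smul, hL1, smul_zero]

theorem mulVec_sub_const {L : Matrix m n α} (hL1 : L *ᵥ (fun _ => 1) = 0) (u : n → α) (c : α) :
    L *ᵥ (u - fun _ => c) = L *ᵥ u := by
  rw [mulVec_sub, mulVec_const_eq_zero hL1, sub_zero]

end Matrix

theorem laplacian_marginal_cost_identity_general {n : ℕ}
    (L : Matrix (Fin n) (Fin n) ℝ) (hL : L.PosSemidef)
    (hL1 : L *ᵥ (fun _ => (1 : ℝ)) = 0)
    (Q : Fin n → ℝ) (R : Fin n → ℝ)
    (θb : Fin n → ℝ) (hθb : ∃ c : ℝ, ∀ i, Q i * θb i + R i = c) :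
    ∀ θ : Fin n → ℝ,
      ((fun i => Q i * (θ i - θb i)) ⬝ᵥ (L *ᵥ fun i => Q i * θ i + R i)
        = (fun i => (Q i * θ i + R i) - (Q i * θb i + R i)) ⬝ᵥ
            (L *ᵥ fun i => (Q i * θ i + R i) - (Q i * θb i + R i)))
      ∧ 0 ≤ (fun i => Q i * (θ i - θb i)) ⬝ᵥ (L *ᵥ fun i => Q i * θ i + R i) := by
  intro θ
  obtain ⟨c, hc⟩ := hθb
  set u : Fin n → ℝ := fun i => Q i * θ i + R i
  have hdev : (fun i => u i - (Q i * θb i + R i)) = u - fun _ => c := funext fun i => by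
    simp only [hc, Pi.sub_apply]
  have hscaled : (fun i => Q i * (θ i - θb i)) = u - fun _ => c := by
    rw [← hdev]
    funext i
    ring
  rw [hdev, hscaled, mulVec_sub_const hL1]
  refine ⟨rfl, ?_⟩
  simpa only [← mulVec_sub_const hL1 u c, star_trivial]
    using hL.dotProduct_mulVec_nonneg (u - fun _ => c)

/-- Communication term identity: for a Laplacian `L` (symmetric PSD, `L1 = 0`)
and `Qθ̄ + R ∈ span{1}`, one has
`(θ−θ̄)ᵀQL(Qθ+R) = (Qθ+R−(Qθ̄+R))ᵀ L (Qθ+R−(Qθ̄+R)) ≥ 0`. -/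
theorem laplacian_marginal_cost_identity {n : ℕ}
    (L : Matrix (Fin n) (Fin n) ℝ) (hL : L.PosSemidef)
    (hL1 : L *ᵥ (fun _ => (1 : ℝ)) = 0)
    (Q : Fin n → ℝ) (hQ : ∀ i, 0 < Q i) (R : Fin n → ℝ)
    (θb : Fin n → ℝ) (hθb : ∃ c : ℝ, ∀ i, Q i * θb i + R i = c) :
    ∀ θ : Fin n → ℝ,
      ((fun i => Q i * (θ i - θb i)) ⬝ᵥ (L *ᵥ fun i => Q i * θ i + R i)
        = (fun i => (Q i * θ i + R i) - (Q i * θb i + R i)) ⬝ᵥ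
            (L *ᵥ fun i => (Q i * θ i + R i) - (Q i * θb i + R i)))
      ∧ 0 ≤ (fun i => Q i * (θ i - θb i)) ⬝ᵥ (L *ᵥ fun i => Q i * θ i + R i) :=
  laplacian_marginal_cost_identity_general L hL hL1 Q R θb hθb
end

section
/- Let B ∈ ℝ^{n×m} satisfy 1_nᵀ B = 0, with rows partitioned into B_g ∈ ℝ^{n_g×m} and B_l ∈ ℝ^{n_l×m} (n = n_g + n_l). Let Γ ∈ ℝ^{m×m} be diagonal, Q ∈ ℝ^{n_g×n_g} diagonal with positive diagonal entries, P̄ ∈ ℝ^{n_g}, P_l ∈ ℝ^{n_l} with 1_{n_g}ᵀP̄ = 1_{n_l}ᵀP_l, and c ∈ ℝ. If there exists η ∈ ℝ^m such that 0 = −B_g Γ sin(η) + P̄ + c·Q⁻¹1_{n_g} and 0 = −B_l Γ sin(η) − P_l, then c = 0. -/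
/-- Key algebraic step in the LaSalle argument: if the network equations hold
with generation `P̄ + c·Q⁻¹1` and the power balance `1ᵀP̄ = 1ᵀP_l` holds, then
the common marginal-cost offset `c` must be zero. -/
theorem lasalle_offset_zero {ng nl m : ℕ} (hng : 0 < ng)
    (Bg : Matrix (Fin ng) (Fin m) ℝ) (Bl : Matrix (Fin nl) (Fin m) ℝ)
    -- 1ₙᵀ B = 0 :
    (hB : ∀ k, (∑ i, Bg i k) + (∑ j, Bl j k) = 0)
    (γ : Fin m → ℝ) (Q : Fin ng → ℝ) (hQ : ∀ i, 0 < Q i)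
    (Pb : Fin ng → ℝ) (Pl : Fin nl → ℝ)
    (hbal : ∑ i, Pb i = ∑ j, Pl j) (c : ℝ) (η : Fin m → ℝ)
    -- 0 = −B_g Γ sin(η) + P̄ + c·Q⁻¹1 :
    (hg : ∀ i, 0 = -(∑ k, Bg i k * (γ k * Real.sin (η k))) + Pb i + c * (Q i)⁻¹)
    -- 0 = −B_l Γ sin(η) − P_l :
    (hl : ∀ j, 0 = -(∑ k, Bl j k * (γ k * Real.sin (η k))) - Pl j) :
    c = 0 := by
  set s : Fin m → ℝ := fun k => γ k * Real.sin (η k) with hs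
  have hgsum : (0:ℝ) = -(∑ i, ∑ k, Bg i k * s k) + (∑ i, Pb i) + c * ∑ i, (Q i)⁻¹ := by
    have h1 : (0:ℝ) = ∑ i, (-(∑ k, Bg i k * s k) + Pb i + c * (Q i)⁻¹) := by
      rw [Finset.sum_congr rfl (fun i _ => (hg i).symm)]; simp
    rw [h1, Finset.sum_add_distrib, Finset.sum_add_distrib, Finset.sum_neg_distrib,
      ← Finset.mul_sum]
  have hlsum : (0:ℝ) = -(∑ j, ∑ k, Bl j k * s k) - ∑ j, Pl j := by
    have h1 : (0:ℝ) = ∑ j, (-(∑ k, Bl j k * s k) - Pl j) := by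
      rw [Finset.sum_congr rfl (fun j _ => (hl j).symm)]; simp
    rw [h1, Finset.sum_sub_distrib, Finset.sum_neg_distrib]
  have hBsum : (∑ i, ∑ k, Bg i k * s k) + (∑ j, ∑ k, Bl j k * s k) = 0 := by
    rw [Finset.sum_comm (s := Finset.univ (α := Fin ng)),
        Finset.sum_comm (s := Finset.univ (α := Fin nl)), ← Finset.sum_add_distrib]
    refine Finset.sum_eq_zero fun k _ => ?_
    rw [← Finset.sum_mul, ← Finset.sum_mul, ← add_mul, hB k, zero_mul]
  have hc : c * ∑ i, (Q i)⁻¹ = 0 := by linarith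
  have hpos : 0 < ∑ i, (Q i)⁻¹ :=
    Finset.sum_pos (fun i _ => inv_pos.mpr (hQ i))
      (by simpa [Finset.univ_nonempty_iff] using Fin.pos_iff_nonempty.mp hng)
  exact (mul_eq_zero.mp hc).resolve_right (ne_of_gt hpos)
end

section
/- Consider the power network with controllable loads: let η : ℝ → ℝ^m, ω_g : ℝ → ℝ^{n_g} be differentiable and, with continuous inputs P_m : ℝ → ℝ^{n_g} and u_l : ℝ → ℝ^{n_l}, satisfy for all t: η̇(t) = B_gᵀω_g(t) + B_lᵀω_l(t) and M ω̇_g(t) = −D_g ω_g(t) − B_g Γ sin(η(t)) + P_m(t), where ω_l(t) = D_l⁻¹(−B_l Γ sin(η(t)) − P_l − u_l(t)). Let constants (η̄, ω̄_g, P̄_m, ū_l) satisfy the corresponding steady-state equations, with ω̄_l = D_l⁻¹(−B_l Γ sin(η̄) − P_l − ū_l). Then for all t: d/dt U(η(t), ω_g(t)) = −(ω_g − ω̄_g)ᵀD_g(ω_g − ω̄_g) − (ω_l − ω̄_l)ᵀD_l(ω_l − ω̄_l) + (ω_g − ω̄_g)ᵀ(P_m(t) − P̄_m) − (ω_l − ω̄_l)ᵀ(u_l(t)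 − ū_l); that is, the network is also output strictly incrementally cyclo-passive with respect to the additional input–output pair (u_l, −ω_l). -/
/-!
Along a trajectory, `U̇ = (ω_g - ω̄_g)ᵀ M ω̇_g + (Γ (sin η - sin η̄))ᵀ η̇`. Subtracting the
steady-state equations writes `M ω̇_g`, `η̇` and `B_l Γ (sin η - sin η̄)` in terms of the
increments alone. The line-flow terms then cancel, since they enter once through `B_g` in the
swing equation and once through `B_gᵀ` in `η̇`, and the remaining `B_l` term becomes load damping
plus the supply rate of `(u_l, -ω_l)` by the algebraic load equation.
-/

open Matrix

variable {G L E : Type*} [Fintype G] [Fintype L] [Fintype E]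

noncomputable def incrementalStorage (M : G → ℝ) (γ : E → ℝ) (ωgb : G → ℝ) (ηb : E → ℝ)
    (e : E → ℝ) (w : G → ℝ) : ℝ :=
  (1/2) * (∑ i, M i * (w i - ωgb i)^2)
    - (∑ k, γ k * Real.cos (e k)) + (∑ k, γ k * Real.cos (ηb k))
    - ∑ k, γ k * Real.sin (ηb k) * (e k - ηb k)

theorem hasDerivAt_incrementalStorage (M : G → ℝ) (γ : E → ℝ) (ωgb : G → ℝ) (ηb : E → ℝ)
    {e : ℝ → E → ℝ} {w : ℝ → G → ℝ} {e' : E → ℝ} {w' : G → ℝ} {t : ℝ}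
    (he : HasDerivAt e e' t) (hw : HasDerivAt w w' t) :
    HasDerivAt (fun s => incrementalStorage M γ ωgb ηb (e s) (w s))
      ((w t - ωgb) ⬝ᵥ (M * w') + (γ * (Real.sin ∘ e t - Real.sin ∘ ηb)) ⬝ᵥ e') t := by
  have hek := hasDerivAt_pi.mp he
  have hwi := hasDerivAt_pi.mp hw
  have hkin : HasDerivAt (fun s => ∑ i, M i * (w s i - ωgb i) ^ 2)
      (∑ i, M i * (2 * (w t i - ωgb i) * w' i)) t :=
    .fun_sum fun i _ => by simpa using (((hwi i).sub_const (ωgb i)).fun_pow 2).const_mul (M i)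
  have hcos : HasDerivAt (fun s => ∑ k, γ k * Real.cos (e s k))
      (∑ k, γ k * (-Real.sin (e t k) * e' k)) t :=
    .fun_sum fun k _ => ((hek k).cos).const_mul (γ k)
  have hlin : HasDerivAt (fun s => ∑ k, γ k * Real.sin (ηb k) * (e s k - ηb k))
      (∑ k, γ k * Real.sin (ηb k) * e' k) t :=
    .fun_sum fun k _ => ((hek k).sub_const (ηb k)).const_mul (γ k * Real.sin (ηb k))
  refine ((((hkin.const_mul (1/2)).fun_sub hcos).add_const
    (∑ k, γ k * Real.cos (ηb k))).fun_sub hlin).congr_deriv ?_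
  simp only [dotProduct, Pi.mul_apply, Pi.sub_apply, Function.comp_apply, Finset.mul_sum]
  rw [sub_sub, ← Finset.sum_add_distrib, sub_eq_add_neg, ← Finset.sum_neg_distrib]
  congr 1 <;> exact Finset.sum_congr rfl fun _ _ => by ring

theorem dotProduct_mul_eq_sum_mul_sq (D x : G → ℝ) : x ⬝ᵥ (D * x) = ∑ i, D i * x i ^ 2 :=
  Finset.sum_congr rfl fun i _ => by simp only [Pi.mul_apply]; ring

theorem network_power_balance (Dg : G → ℝ) (Dl : L → ℝ) (Bg : Matrix G E ℝ) (Bl : Matrix L E ℝ)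
    (x ΔP : G → ℝ) (y Δu : L → ℝ) (s : E → ℝ) (hs : Bl *ᵥ s = -(Dl * y) - Δu) :
    x ⬝ᵥ (-(Dg * x) - Bg *ᵥ s + ΔP) + s ⬝ᵥ (Bgᵀ *ᵥ x + Blᵀ *ᵥ y)
      = -(∑ i, Dg i * x i ^ 2) - (∑ j, Dl j * y j ^ 2) + x ⬝ᵥ ΔP - y ⬝ᵥ Δu := by
  simp only [dotProduct_add, dotProduct_transpose_mulVec, hs, dotProduct_sub, dotProduct_neg,
    ← dotProduct_mul_eq_sum_mul_sq]
  ring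

theorem incremental_passivity_load_control_general {m ng nl : ℕ}
    (M Dg : Fin ng → ℝ) (Dl : Fin nl → ℝ) (γ : Fin m → ℝ)
    (Bg : Matrix (Fin ng) (Fin m) ℝ) (Bl : Matrix (Fin nl) (Fin m) ℝ)
    (Pl : Fin nl → ℝ)
    (hM : ∀ i, 0 < M i) (hDl : ∀ j, 0 < Dl j)
    (η : ℝ → Fin m → ℝ) (ωg : ℝ → Fin ng → ℝ)
    (Pm : ℝ → Fin ng → ℝ) (ul : ℝ → Fin nl → ℝ)
    (ωl : ℝ → Fin nl → ℝ)
    -- ω_l = D_l⁻¹(−B_l Γ sin(η) − P_l − u_l) :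
    (hωl : ∀ t j, ωl t j
      = (-(∑ k, Bl j k * (γ k * Real.sin (η t k))) - Pl j - ul t j) / Dl j)
    -- η̇ = B_gᵀ ω_g + B_lᵀ ω_l :
    (hη : ∀ t, HasDerivAt η
      (fun k => (∑ i, Bg i k * ωg t i) + ∑ j, Bl j k * ωl t j) t)
    -- M ω̇_g = −D_g ω_g − B_g Γ sin(η) + P_m :
    (hωg : ∀ t, HasDerivAt ωg
      (fun i => (-(Dg i * ωg t i)
        - (∑ k, Bg i k * (γ k * Real.sin (η t k))) + Pm t i) / M i) t)
    (ηb : Fin m → ℝ) (ωgb : Fin ng → ℝ) (Pmb : Fin ng → ℝ)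
    (ulb : Fin nl → ℝ) (ωlb : Fin nl → ℝ)
    (hωlb : ∀ j, ωlb j
      = (-(∑ k, Bl j k * (γ k * Real.sin (ηb k))) - Pl j - ulb j) / Dl j)
    -- 0 = B_gᵀ ω̄_g + B_lᵀ ω̄_l :
    (hss1 : ∀ k, 0 = (∑ i, Bg i k * ωgb i) + ∑ j, Bl j k * ωlb j)
    -- 0 = −D_g ω̄_g − B_g Γ sin(η̄) + P̄_m :
    (hss2 : ∀ i, 0 = -(Dg i * ωgb i)
      - (∑ k, Bg i k * (γ k * Real.sin (ηb k))) + Pmb i)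
    (U : (Fin m → ℝ) → (Fin ng → ℝ) → ℝ)
    (hU : ∀ e w, U e w = (1/2) * (∑ i, M i * (w i - ωgb i)^2)
      - (∑ k, γ k * Real.cos (e k)) + (∑ k, γ k * Real.cos (ηb k))
      - ∑ k, γ k * Real.sin (ηb k) * (e k - ηb k)) :
    ∀ t, HasDerivAt (fun s => U (η s) (ωg s))
      (-(∑ i, Dg i * (ωg t i - ωgb i)^2) - (∑ j, Dl j * (ωl t j - ωlb j)^2)
        + (∑ i, (ωg t i - ωgb i) * (Pm t i - Pmb i))
        - ∑ j, (ωl t j - ωlb j) * (ul t j - ulb j)) t := by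
  intro t
  set σ := γ * (Real.sin ∘ η t - Real.sin ∘ ηb)
  have hBs {n : ℕ} (B : Matrix (Fin n) (Fin m) ℝ) :
      B *ᵥ σ = B *ᵥ (γ * (Real.sin ∘ η t)) - B *ᵥ (γ * (Real.sin ∘ ηb)) := by
    rw [← mulVec_sub, ← mul_sub]
  obtain ⟨ωg', hωg', hswing⟩ : ∃ v, HasDerivAt ωg v t ∧
      M * v = -(Dg * (ωg t - ωgb)) - Bg *ᵥ σ + (Pm t - Pmb) := by
    refine ⟨_, hωg t, funext fun i => ?_⟩
    simp only [hBs, Pi.mul_apply, Pi.add_apply, Pi.sub_apply, Pi.neg_apply,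
      mul_div_cancel₀ _ (hM i).ne', mulVec, dotProduct, Function.comp_apply]
    linarith [hss2 i]
  obtain ⟨η', hη', hflow⟩ : ∃ v, HasDerivAt η v t ∧
      v = Bgᵀ *ᵥ (ωg t - ωgb) + Blᵀ *ᵥ (ωl t - ωlb) := by
    refine ⟨_, hη t, funext fun k => ?_⟩
    simp only [mulVec_sub, Pi.add_apply, Pi.sub_apply, mulVec, dotProduct, transpose_apply]
    linarith [hss1 k]
  have hload : Bl *ᵥ σ = -(Dl * (ωl t - ωlb)) - (ul t - ulb) := by
    funext j
    simp only [hBs, Pi.mul_apply, Pi.sub_apply, Pi.neg_apply, hωl t j, hωlb j, mul_sub,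
      mul_div_cancel₀ _ (hDl j).ne']
    simp only [mulVec, dotProduct, Pi.mul_apply, Function.comp_apply]
    ring
  rw [show (fun s => U (η s) (ωg s)) = fun s => incrementalStorage M γ ωgb ηb (η s) (ωg s) from
    funext fun s => hU (η s) (ωg s)]
  convert hasDerivAt_incrementalStorage M γ ωgb ηb hη' hωg' using 1
  rw [hswing, hflow, network_power_balance Dg Dl Bg Bl _ _ _ _ σ hload]
  rfl

/-- Incremental cyclo-passivity of the power network with controllable loads:
the storage function `U` additionally satisfies the passivity inequality with
respect to the input–output pair `(u_l, −ω_l)`. -/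
theorem incremental_passivity_load_control {m ng nl : ℕ}
    (M Dg : Fin ng → ℝ) (Dl : Fin nl → ℝ) (γ : Fin m → ℝ)
    (Bg : Matrix (Fin ng) (Fin m) ℝ) (Bl : Matrix (Fin nl) (Fin m) ℝ)
    (Pl : Fin nl → ℝ)
    (hM : ∀ i, 0 < M i) (hDg : ∀ i, 0 < Dg i) (hDl : ∀ j, 0 < Dl j)
    (hγ : ∀ k, 0 < γ k)
    (η : ℝ → Fin m → ℝ) (ωg : ℝ → Fin ng → ℝ)
    (Pm : ℝ → Fin ng → ℝ) (ul : ℝ → Fin nl → ℝ)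
    (hPmcont : Continuous Pm) (hulcont : Continuous ul)
    (ωl : ℝ → Fin nl → ℝ)
    -- ω_l = D_l⁻¹(−B_l Γ sin(η) − P_l − u_l) :
    (hωl : ∀ t j, ωl t j
      = (-(∑ k, Bl j k * (γ k * Real.sin (η t k))) - Pl j - ul t j) / Dl j)
    -- η̇ = B_gᵀ ω_g + B_lᵀ ω_l :
    (hη : ∀ t, HasDerivAt η
      (fun k => (∑ i, Bg i k * ωg t i) + ∑ j, Bl j k * ωl t j) t)
    -- M ω̇_g = −D_g ω_g − B_g Γ sin(η) + P_m :
    (hωg : ∀ t, HasDerivAt ωg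
      (fun i => (-(Dg i * ωg t i)
        - (∑ k, Bg i k * (γ k * Real.sin (η t k))) + Pm t i) / M i) t)
    (ηb : Fin m → ℝ) (ωgb : Fin ng → ℝ) (Pmb : Fin ng → ℝ)
    (ulb : Fin nl → ℝ) (ωlb : Fin nl → ℝ)
    (hωlb : ∀ j, ωlb j
      = (-(∑ k, Bl j k * (γ k * Real.sin (ηb k))) - Pl j - ulb j) / Dl j)
    -- 0 = B_gᵀ ω̄_g + B_lᵀ ω̄_l :
    (hss1 : ∀ k, 0 = (∑ i, Bg i k * ωgb i) + ∑ j, Bl j k * ωlb j)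
    -- 0 = −D_g ω̄_g − B_g Γ sin(η̄) + P̄_m :
    (hss2 : ∀ i, 0 = -(Dg i * ωgb i)
      - (∑ k, Bg i k * (γ k * Real.sin (ηb k))) + Pmb i)
    (U : (Fin m → ℝ) → (Fin ng → ℝ) → ℝ)
    (hU : ∀ e w, U e w = (1/2) * (∑ i, M i * (w i - ωgb i)^2)
      - (∑ k, γ k * Real.cos (e k)) + (∑ k, γ k * Real.cos (ηb k))
      - ∑ k, γ k * Real.sin (ηb k) * (e k - ηb k)) :
    ∀ t, HasDerivAt (fun s => U (η s) (ωg s))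
      (-(∑ i, Dg i * (ωg t i - ωgb i)^2) - (∑ j, Dl j * (ωl t j - ωlb j)^2)
        + (∑ i, (ωg t i - ωgb i) * (Pm t i - Pmb i))
        - ∑ j, (ωl t j - ωlb j) * (ul t j - ulb j)) t :=
  incremental_passivity_load_control_general M Dg Dl γ Bg Bl Pl hM hDl η ωg Pm ul ωl hωl hη hωg ηb
    ωgb Pmb ulb ωlb hωlb hss1 hss2 U hU
end
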